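/- Define g(α) = ∫_0^α sign(z − Φ^{-1}(z))·z dz + ∫_α^1 sign(z − Φ^{-1}(z))·(z − 1) dz for α ∈ [0,1]. Let X = min of g(α) over all α ∈ [0,1] satisfying Φ(α) = α, and let Y = min of g(α) over all α ∈ [0,1]. Then X = Y; that is, the minimum of g restricted to fixed points of Φ equals the unrestricted minimum of g over [0,1]. -/

import Mathlib

/-!
Since `Φ` is strictly increasing, `sign (z - Φ⁻¹ z) = sign (Φ z - z)` on `[0, 1]`, and since the
two weights `z` and `z - 1` differ by `1`, `g α - g β = ∫ z in β..α, sign (Φ z - z)`.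
If `Φ α ≤ α`, then `Φ z - z ≤ 0` from `α` up to the first fixed point `β ≥ α` (there is one,
as `Φ 1 = 1`), so `g β ≤ g α`; if `Φ α ≥ α`, the last fixed point below `α` works in the same
way. Thus every value of `g` on `[0, 1]` is dominated by a value at a fixed point.
-/

open Set MeasureTheory intervalIntegral

namespace Real

theorem monotone_sign : Monotone Real.sign := by
  intro x y hxy
  rcases lt_trichotomy x 0 with hx | rfl | hx
  · rw [sign_of_neg hx]
    rcases sign_apply_eq y with h | h | h <;> rw [h] <;> norm_num
  · rcases hxy.eq_or_lt with rfl | hy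
    · rfl
    · rw [sign_zero, sign_of_pos hy]; norm_num
  · rw [sign_of_pos hx, sign_of_pos (hx.trans_le hxy)]

theorem measurable_sign : Measurable Real.sign :=
  monotone_sign.measurable

theorem abs_sign_le_one (x : ℝ) : |Real.sign x| ≤ 1 := by
  rcases sign_apply_eq x with h | h | h <;> rw [h] <;> norm_num

theorem sign_sub_eq_of_strictMonoOn {Φ : ℝ → ℝ} {s : Set ℝ} (hΦ : StrictMonoOn Φ s)
    {x y : ℝ} (hx : x ∈ s) (hy : y ∈ s) : Real.sign (Φ x - Φ y) = Real.sign (x - y) := by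
  rcases lt_trichotomy x y with hxy | rfl | hxy
  · rw [sign_of_neg (sub_neg.2 hxy), sign_of_neg (sub_neg.2 (hΦ hx hy hxy))]
  · simp
  · rw [sign_of_pos (sub_pos.2 hxy), sign_of_pos (sub_pos.2 (hΦ hy hx hxy))]

end Real

theorem strictMonoOn_integral_of_pos {φ : ℝ → ℝ} {a b : ℝ} (hφ : ContinuousOn φ (Icc a b))
    (hpos : ∀ t ∈ Icc a b, 0 < φ t) : StrictMonoOn (fun x => ∫ t in a..x, φ t) (Icc a b) := by
  intro x hx y hy hxy
  have hint : ∀ {u v}, u ∈ Icc a b → v ∈ Icc a b → IntervalIntegrable φ volume u v :=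
    fun hu hv => (hφ.mono (uIcc_subset_Icc hu hv)).intervalIntegrable
  have ha : a ∈ Icc a b := left_mem_Icc.2 (hx.1.trans hx.2)
  have hxy_pos : 0 < ∫ t in x..y, φ t := intervalIntegral_pos_of_pos_on (hint hx hy)
    (fun t ht => hpos t ⟨hx.1.trans ht.1.le, ht.2.le.trans hy.2⟩) hxy
  rw [← integral_interval_sub_left (hint ha hy) (hint ha hx)] at hxy_pos
  exact sub_pos.1 hxy_pos

theorem integrableOn_sign_comp {X : Type*} [MeasurableSpace X] [TopologicalSpace X]
    [OpensMeasurableSpace X] {μ : Measure X} {f : X → ℝ} {s : Set X} (hf : ContinuousOn f s)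
    (hs : MeasurableSet s) (hμs : μ s < ⊤) : IntegrableOn (fun z => Real.sign (f z)) s μ :=
  .of_bound hμs (Real.measurable_sign.comp_aemeasurable (hf.aemeasurable hs)).aestronglyMeasurable
    1 (ae_of_all _ fun z => Real.abs_sign_le_one (f z))

theorem integral_mul_add_integral_mul_sub_one_sub {s : ℝ → ℝ} {a b α β : ℝ}
    (hs : IntegrableOn s (Icc a b)) (hα : α ∈ Icc a b) (hβ : β ∈ Icc a b) :
    ((∫ z in a..α, s z * z) + ∫ z in α..b, s z * (z - 1)) -
      ((∫ z in a..β, s z * z) + ∫ z in β..b, s z * (z - 1)) = ∫ z in β..α, s z := by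
  have hab : a ≤ b := hα.1.trans hα.2
  have hint : ∀ {w : ℝ → ℝ}, Continuous w → ∀ {x y}, x ∈ Icc a b → y ∈ Icc a b →
      IntervalIntegrable (fun z => s z * w z) volume x y := fun hw x y hx hy =>
    ((hs.mul_continuousOn hw.continuousOn isCompact_Icc).mono_set
      (uIcc_subset_Icc hx hy)).intervalIntegrable
  have h₀ : ∀ {x y}, x ∈ Icc a b → y ∈ Icc a b →
      IntervalIntegrable (fun z => s z * z) volume x y := hint continuous_id
  have h₁ : ∀ {x y}, x ∈ Icc a b → y ∈ Icc a b →
      IntervalIntegrable (fun z => s z * (z - 1)) volume x y :=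
    hint (continuous_id.sub continuous_const)
  have ha : a ∈ Icc a b := left_mem_Icc.2 hab
  have hb : b ∈ Icc a b := right_mem_Icc.2 hab
  have e₀ : (∫ z in a..α, s z * z) - ∫ z in a..β, s z * z = ∫ z in β..α, s z * z :=
    integral_interval_sub_left (h₀ ha hα) (h₀ ha hβ)
  have e₁ : (∫ z in β..α, s z * (z - 1)) + ∫ z in α..b, s z * (z - 1) =
      ∫ z in β..b, s z * (z - 1) :=
    integral_add_adjacent_intervals (h₁ hβ hα) (h₁ hα hb)
  have e₂ : (∫ z in β..α, s z * z) - ∫ z in β..α, s z * (z - 1) = ∫ z in β..α, s z := by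
    rw [← integral_sub (h₀ hβ hα) (h₁ hβ hα)]
    ring_nf
  linarith

theorem exists_zero_forall_nonpos_Icc {f : ℝ → ℝ} {a b : ℝ} (hab : a ≤ b)
    (hf : ContinuousOn f (Icc a b)) (ha : f a ≤ 0) (hb : 0 ≤ f b) :
    ∃ c ∈ Icc a b, f c = 0 ∧ ∀ x ∈ Icc a c, f x ≤ 0 := by
  set S := Icc a b ∩ f ⁻¹' Ici 0
  have hbS : b ∈ S := ⟨right_mem_Icc.2 hab, hb⟩
  have hcS : sInf S ∈ S := (hf.preimage_isClosed_of_isClosed isClosed_Icc isClosed_Ici).csInf_mem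
    ⟨b, hbS⟩ ⟨a, fun x hx => hx.1.1⟩
  have hc : sInf S ∈ Icc a b := hcS.1
  -- a crossing of zero in `[a, sInf S]` lies in `S`, hence can only be `sInf S` itself
  obtain ⟨y, hy, hy0⟩ := intermediate_value_Icc hc.1 (hf.mono (Icc_subset_Icc_right hc.2))
    ⟨ha, hcS.2⟩
  have hyc : y = sInf S :=
    le_antisymm hy.2 (csInf_le ⟨a, fun x hx => hx.1.1⟩ ⟨⟨hy.1, hy.2.trans hc.2⟩, hy0.ge⟩)
  refine ⟨sInf S, hc, hyc ▸ hy0, fun x hx => ?_⟩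
  rcases hx.2.eq_or_lt with rfl | hxc
  · exact (hyc ▸ hy0).le
  · by_contra! hfx
    have hxS : x ∈ S := ⟨⟨hx.1, hxc.le.trans hc.2⟩, hfx.le⟩
    exact (csInf_le ⟨a, fun x hx => hx.1.1⟩ hxS).not_gt hxc

theorem exists_zero_forall_nonneg_Icc {f : ℝ → ℝ} {a b : ℝ} (hab : a ≤ b)
    (hf : ContinuousOn f (Icc a b)) (ha : f a ≤ 0) (hb : 0 ≤ f b) :
    ∃ c ∈ Icc a b, f c = 0 ∧ ∀ x ∈ Icc c b, 0 ≤ f x := by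
  have hf' : ContinuousOn (fun x => -f (-x)) (Icc (-b) (-a)) :=
    (hf.comp continuousOn_neg fun x hx => ⟨le_neg.2 hx.2, neg_le.2 hx.1⟩).neg
  obtain ⟨c, hc, hfc, hneg⟩ :=
    exists_zero_forall_nonpos_Icc (neg_le_neg hab) hf' (by simpa using hb) (by simpa using ha)
  refine ⟨-c, ⟨le_neg.1 hc.2, neg_le.1 hc.1⟩, by simpa using hfc, fun x hx => ?_⟩
  simpa using hneg (-x) ⟨neg_le_neg hx.2, neg_le.2 hx.1⟩

theorem exists_zero_le_of_sub_eq_integral_sign {f G : ℝ → ℝ} {a b α : ℝ}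
    (hf : ContinuousOn f (Icc a b)) (ha : f a ≤ 0) (hb : 0 ≤ f b)
    (hG : ∀ x ∈ Icc a b, ∀ y ∈ Icc a b, G x - G y = ∫ z in y..x, Real.sign (f z))
    (hα : α ∈ Icc a b) : ∃ β ∈ Icc a b, f β = 0 ∧ G β ≤ G α := by
  rcases le_total (f α) 0 with hfα | hfα
  · obtain ⟨β, hβ, hfβ, hneg⟩ :=
      exists_zero_forall_nonpos_Icc hα.2 (hf.mono (Icc_subset_Icc_left hα.1)) hfα hb
    have hβ' : β ∈ Icc a b := ⟨hα.1.trans hβ.1, hβ.2⟩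
    have : 0 ≤ ∫ z in α..β, -Real.sign (f z) := integral_nonneg hβ.1 fun z hz =>
      neg_nonneg.2 (Real.sign_zero ▸ Real.monotone_sign (hneg z hz))
    rw [intervalIntegral.integral_neg] at this
    exact ⟨β, hβ', hfβ, by linarith [hG β hβ' α hα]⟩
  · obtain ⟨β, hβ, hfβ, hpos⟩ :=
      exists_zero_forall_nonneg_Icc hα.1 (hf.mono (Icc_subset_Icc_right hα.2)) ha hfα
    have hβ' : β ∈ Icc a b := ⟨hβ.1, hβ.2.trans hα.2⟩
    have : 0 ≤ ∫ z in β..α, Real.sign (f z) := integral_nonneg hβ.2 fun z hz =>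
      Real.sign_zero ▸ Real.monotone_sign (hpos z hz)
    exact ⟨β, hβ', hfβ, by linarith [hG α hα β hβ']⟩

theorem stmt_7_general (φ Φ Ψ : ℝ → ℝ) (c C : ℝ) (hc : 0 < c)
    (hφcont : ContinuousOn φ (Set.Icc 0 1))
    (hφ : ∀ t ∈ Set.Icc (0 : ℝ) 1, c ≤ φ t ∧ φ t ≤ C)
    (hint : (∫ t in (0 : ℝ)..1, φ t) = 1)
    (hΦ : ∀ x ∈ Set.Icc (0 : ℝ) 1, Φ x = ∫ t in (0 : ℝ)..x, φ t)
    (hΨ : ∀ y ∈ Set.Icc (0 : ℝ) 1, Ψ y ∈ Set.Icc (0 : ℝ) 1 ∧ Φ (Ψ y) = y)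
    (g : ℝ → ℝ)
    (hg : ∀ α, g α = (∫ z in (0 : ℝ)..α, Real.sign (z - Ψ z) * z) +
      ∫ z in α..(1 : ℝ), Real.sign (z - Ψ z) * (z - 1)) :
    sInf (g '' {α ∈ Set.Icc (0 : ℝ) 1 | Φ α = α}) = sInf (g '' Set.Icc (0 : ℝ) 1) := by
  have h0 : (0 : ℝ) ∈ Icc 0 1 := left_mem_Icc.2 zero_le_one
  have h1 : (1 : ℝ) ∈ Icc 0 1 := right_mem_Icc.2 zero_le_one
  have hΦcont : ContinuousOn Φ (Icc 0 1) := by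
    have hφ' : ContinuousOn φ (uIcc 0 1) := by rwa [uIcc_of_le zero_le_one]
    have := continuousOn_primitive_interval (hφ'.integrableOn_compact (μ := volume) isCompact_uIcc)
    rw [uIcc_of_le zero_le_one] at this
    exact this.congr hΦ
  have hΦmono : StrictMonoOn Φ (Icc 0 1) := fun x hx y hy hxy => by
    rw [hΦ x hx, hΦ y hy]
    exact strictMonoOn_integral_of_pos hφcont (fun t ht => hc.trans_le (hφ t ht).1) hx hy hxy
  set f : ℝ → ℝ := fun z => Φ z - z
  have hf : ContinuousOn f (Icc 0 1) := hΦcont.sub continuousOn_id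
  have hsign : EqOn (fun z => Real.sign (f z)) (fun z => Real.sign (z - Ψ z)) (Icc 0 1) :=
    fun z hz => by
      obtain ⟨hΨz, hΦΨ⟩ := hΨ z hz
      simpa [f, hΦΨ] using Real.sign_sub_eq_of_strictMonoOn hΦmono hz hΨz
  have hG : ∀ x ∈ Icc (0 : ℝ) 1, ∀ y ∈ Icc (0 : ℝ) 1,
      g x - g y = ∫ z in y..x, Real.sign (f z) := fun x hx y hy => by
    rw [hg, hg, integral_mul_add_integral_mul_sub_one_sub ((integrableOn_sign_comp hf
      measurableSet_Icc measure_Icc_lt_top).congr_fun hsign measurableSet_Icc) hx hy]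
    exact integral_congr fun z hz => (hsign (uIcc_subset_Icc hy hx hz)).symm
  have hf0 : f 0 = 0 := by simp [f, hΦ 0 h0]
  have hf1 : f 1 = 0 := by simp [f, hΦ 1 h1, hint]
  refine csInf_eq_csInf_of_forall_exists_le ?_ ?_
  · rintro _ ⟨α, hα, rfl⟩
    exact ⟨g α, mem_image_of_mem g hα.1, le_rfl⟩
  · rintro _ ⟨α, hα, rfl⟩
    obtain ⟨β, hβ, hfβ, hle⟩ := exists_zero_le_of_sub_eq_integral_sign hf hf0.le hf1.ge hG hα
    exact ⟨g β, mem_image_of_mem g ⟨hβ, sub_eq_zero.1 hfβ⟩, hle⟩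

/-- with `g(α) = ∫_0^α sign(z − Φ⁻¹(z)) z dz + ∫_α^1 sign(z − Φ⁻¹(z)) (z−1) dz`,
the minimum of `g` over the fixed points of `Φ` equals the minimum of `g` over all of `[0,1]`. -/
theorem stmt_7 (φ Φ Ψ : ℝ → ℝ) (c C : ℝ) (hc : 0 < c)
    (hφcont : ContinuousOn φ (Set.Icc 0 1))
    (hφ : ∀ t ∈ Set.Icc (0 : ℝ) 1, c ≤ φ t ∧ φ t ≤ C)
    (hint : (∫ t in (0 : ℝ)..1, φ t) = 1)
    (hΦ : ∀ x ∈ Set.Icc (0 : ℝ) 1, Φ x = ∫ t in (0 : ℝ)..x, φ t)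
    (hΨ : ∀ y ∈ Set.Icc (0 : ℝ) 1, Ψ y ∈ Set.Icc (0 : ℝ) 1 ∧ Φ (Ψ y) = y)
    (hΨ' : ∀ x ∈ Set.Icc (0 : ℝ) 1, Ψ (Φ x) = x)
    (hfin : {x ∈ Set.Icc (0 : ℝ) 1 | Φ x = x}.Finite)
    (g : ℝ → ℝ)
    (hg : ∀ α, g α = (∫ z in (0 : ℝ)..α, Real.sign (z - Ψ z) * z) +
      ∫ z in α..(1 : ℝ), Real.sign (z - Ψ z) * (z - 1)) :
    sInf (g '' {α ∈ Set.Icc (0 : ℝ) 1 | Φ α = α}) = sInf (g '' Set.Icc (0 : ℝ) 1) :=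
  stmt_7_general φ Φ Ψ c C hc hφcont hφ hint hΦ hΨ g hg
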